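/- A parity check matrix produced by the greedy (leximatrix) algorithm with parameter $R$ yields a code of minimum distance at least $R + 2$: in the greedily chosen set of normalized vectors of $\mathbb{F}_q^r$, any $R + 1$ distinct chosen vectors are linearly independent. -/
import Mathlib


/-- A nonzero vector whose first (leftmost) nonzero coordinate is `1`. -/
def Normalized {F : Type} [Field F] {r : ℕ} (v : Fin r → F) : Prop :=
  ∃ k : Fin r, v k = 1 ∧ ∀ l : Fin r, l < k → v l = 0

/-- In the greedily chosen set of normalized vectors of `F_q^r` (greedy parameter `R`,
with `R + 1 ≤ r`), any `R + 1` distinct chosen vectors are linearly independent; hence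
the resulting code has minimum distance at least `R + 2`. -/
theorem stmt16 (q : ℕ) {F : Type} [Field F] [Fintype F] [DecidableEq F] {r R m : ℕ}
    (hq : Fintype.card F = q) (hRr : R + 1 ≤ r)
    (h : Fin m → (Fin r → F)) (hinj : Function.Injective h)
    (hnorm : ∀ i, Normalized (h i))
    (hall : ∀ v : Fin r → F, Normalized v → ∃ i, h i = v)
    (chosen : Fin m → Prop)
    (hgreedy : ∀ i : Fin m, chosen i ↔
      ¬ ∃ (s : Finset (Fin m)) (c : Fin m → F),
        (∀ j ∈ s, j < i ∧ chosen j) ∧ s.card ≤ R ∧ h i = ∑ j ∈ s, c j • h j) :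
    ∀ s : Finset (Fin m), (∀ i ∈ s, chosen i) → s.card = R + 1 →
      LinearIndependent F (fun i : {x // x ∈ s} => h i.1) := by
  intro s hs hcard
  rw [linearIndependent_iff']
  intro t g hsum i hi
  by_contra hgi
  classical
  set supp := t.filter (fun j => g j ≠ 0) with hsupp
  have hisupp : i ∈ supp := Finset.mem_filter.2 ⟨hi, hgi⟩
  have hne : supp.Nonempty := ⟨i, hisupp⟩
  set i0 := supp.max' hne with hi0
  have hi0supp : i0 ∈ supp := supp.max'_mem hne
  have hi0t : i0 ∈ t := (Finset.mem_filter.1 hi0supp).1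
  have hgi0 : g i0 ≠ 0 := (Finset.mem_filter.1 hi0supp).2
  have hsum2 : ∑ j ∈ supp, g j • h j.1 = 0 := by
    rw [hsupp, Finset.sum_filter_of_ne (fun x hx hne0 => by
      intro h0; exact hne0 (by rw [h0, zero_smul]))]
    exact hsum
  have hsplit : g i0 • h i0.1 + ∑ j ∈ supp.erase i0, g j • h j.1 = 0 := by
    rw [← Finset.add_sum_erase supp (fun j => g j • h j.1) hi0supp] at hsum2
    exact hsum2
  have heq : h i0.1 = ∑ j ∈ supp.erase i0, (-(g j) / g i0) • h j.1 := by
    have h1 : g i0 • h i0.1 = ∑ j ∈ supp.erase i0, (-(g j)) • h j.1 := by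
      rw [eq_neg_of_add_eq_zero_left hsplit, ← Finset.sum_neg_distrib]
      simp [neg_smul]
    calc h i0.1 = (g i0)⁻¹ • (g i0 • h i0.1) := by
          rw [smul_smul, inv_mul_cancel₀ hgi0, one_smul]
      _ = ∑ j ∈ supp.erase i0, (-(g j) / g i0) • h j.1 := by
          rw [h1, Finset.smul_sum]
          refine Finset.sum_congr rfl fun j _ => ?_
          rw [smul_smul, div_eq_mul_inv, mul_comm]
  set S := (supp.erase i0).image Subtype.val with hS
  set c : Fin m → F := fun j => if hj : j ∈ s then -(g ⟨j, hj⟩) / g i0 else 0 with hc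
  have hcval : ∀ x : {y // y ∈ s}, c x.1 = -(g x) / g i0 := by
    intro x
    simp only [hc, dif_pos x.2, Subtype.eta]
  have hSsum : ∑ j ∈ S, c j • h j = ∑ x ∈ supp.erase i0, c x.1 • h x.1 :=
    Finset.sum_image (fun a _ b _ hab => Subtype.val_injective hab)
  have hchos : chosen i0.1 := hs i0.1 i0.2
  refine (hgreedy i0.1).1 hchos ⟨S, c, ?_, ?_, ?_⟩
  · intro j hj
    obtain ⟨x, hx, rfl⟩ := Finset.mem_image.1 hj
    have hx' := Finset.mem_erase.1 hx
    have hle : x ≤ i0 := supp.le_max' x hx'.2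
    exact ⟨Subtype.coe_lt_coe.2 (lt_of_le_of_ne hle hx'.1), hs x.1 x.2⟩
  · have h1 : S.card ≤ (supp.erase i0).card := Finset.card_image_le
    have h2 : (supp.erase i0).card = supp.card - 1 := Finset.card_erase_of_mem hi0supp
    have h3 : supp.card ≤ t.card := Finset.card_filter_le _ _
    have h4 : t.card ≤ s.card := by
      calc t.card ≤ Fintype.card {x // x ∈ s} := Finset.card_le_univ t
        _ = s.card := Fintype.card_coe s
    omega
  · rw [hSsum, heq]
    exact Finset.sum_congr rfl fun x _ => by rw [hcval]
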